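/- Let n ≥ 2 and let w, w' ∈ {0,1}^{{-1,1}^n} be distinct, each of Hamming weight 2^{n-1}, with Hamming distance dist(w, w') ≥ 2^n/4. Then vol(B_w ∩ B_{w'}) / vol(B_w) ≤ (1 + 3/(8(n-1))) / (1 + 1/(2(n-1))) ≤ 1 - 1/(8n). -/

import Mathlib

open MeasureTheory Set ENNReal Finset

/-- The cross polytope `O_n`: the convex hull of `{±e_i : i ∈ [n]}`. -/
noncomputable def crossPolytope (n : ℕ) : Set (Fin n → ℝ) :=
  convexHull ℝ ((Set.range fun i : Fin n => Pi.single i (1 : ℝ)) ∪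
    (Set.range fun i : Fin n => Pi.single i (-1 : ℝ)))

/-- The sign vector in `{-1,1}^n` associated to `b : Fin n → Bool`. -/
def signVec (n : ℕ) (b : Fin n → Bool) : Fin n → ℝ := fun i => if b i then 1 else -1

/-- The peak attached to the facet `F_s = conv{s_i e_i}`, namely
`conv(F_s ∪ {s/(n-1)})`. -/
noncomputable def peak (n : ℕ) (s : Fin n → ℝ) : Set (Fin n → ℝ) :=
  convexHull ℝ ((Set.range fun i : Fin n => Pi.single i (s i)) ∪ {((n : ℝ) - 1)⁻¹ • s})

/-- The cross polytope with the peaks indexed by the 0–1 vector `w` attached. -/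
noncomputable def body (n : ℕ) (w : (Fin n → Bool) → Bool) : Set (Fin n → ℝ) :=
  crossPolytope n ∪ ⋃ (b : Fin n → Bool) (_ : w b = true), peak n (signVec n b)

/-- The Hamming weight of a binary word: the number of coordinates equal to `true`. -/
def wt {ι : Type*} [Fintype ι] (c : ι → Bool) : ℕ :=
  (Finset.univ.filter fun i => c i = true).card

/-!
The hyperplanes `⟨s, x⟩ = 1` of the facets of `O_n` separate `O_n` from every peak and the peaks
from each other, so up to a null set `B_w` is the disjoint union of `O_n` and its peaks, and
`B_w ∩ B_{w'} ⊆ B_{w ⊓ w'}`. Each peak is an affine image of the corner simplex `conv{0, e_i}`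
with determinant `±1/(n-1)`, while the `2^n` reflections of the corner simplex cover `O_n`; so
with `p` the volume of a peak, `vol O_n ≤ 2^n (n-1) p`. Since `wt (w ⊓ w') ≤ (3/4) 2^{n-1}` by
the distance assumption, the ratio is at most `(V + (3/4) 2^{n-1} p) / (V + 2^{n-1} p)` with
`V = vol O_n`, which increases with `V` and so is largest at `V = 2^n (n-1) p`.
-/

open Matrix
open scoped Pointwise

theorem MeasureTheory.Measure.addHaar_setOf_apply_eq {E : Type*} [NormedAddCommGroup E]
    [NormedSpace ℝ E] [MeasurableSpace E] [BorelSpace E] [FiniteDimensional ℝ E] (μ : Measure E)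
    [μ.IsAddHaarMeasure] {f : E →ₗ[ℝ] ℝ} (hf : f ≠ 0) (c : ℝ) : μ {x | f x = c} = 0 := by
  obtain ⟨x₀, rfl⟩ := LinearMap.surjective_of_ne_zero hf c
  have hset : {x | f x = f x₀} = (· + -x₀) ⁻¹' (LinearMap.ker f : Set E) := by
    ext x
    simp [sub_eq_zero, ← sub_eq_add_neg]
  rw [hset, measure_preimage_add_right]
  exact Measure.addHaar_submodule μ _ (mt LinearMap.ker_eq_top.mp hf)

theorem wt_add_wt {ι : Type*} [Fintype ι] (c c' : ι → Bool) :
    wt c + wt c' = hammingDist c c' + 2 * wt (c ⊓ c') := by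
  simp only [wt, hammingDist, card_filter, ← sum_add_distrib, mul_sum]
  refine sum_congr rfl fun i _ => ?_
  cases hi : c i <;> cases hi' : c' i <;> simp [hi, hi']

theorem four_mul_wt_inf_le {ι : Type*} [Fintype ι] {c c' : ι → Bool} {k : ℕ} (hc : wt c = k)
    (hc' : wt c' = k) (hk : k ≤ 2 * hammingDist c c') : 4 * wt (c ⊓ c') ≤ 3 * k := by
  have := wt_add_wt c c'
  omega

theorem add_div_add_le_of_le_mul {x y b c t : ℝ} (hx : 0 ≤ x) (hxb : x ≤ c * b)
    (hyb : y ≤ t * b) (hb : 0 ≤ b) (hc : 0 ≤ c) (ht₀ : 0 ≤ t) (ht₁ : t ≤ 1) :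
    (x + y) / (x + b) ≤ (c + t) / (c + 1) := by
  refine div_le_of_le_mul₀ (by positivity) (by positivity) ?_
  rw [div_mul_eq_mul_div, le_div_iff₀ (by positivity)]
  nlinarith [mul_le_mul_of_nonneg_left hyb (by positivity : 0 ≤ c + 1),
    mul_le_mul_of_nonneg_left hxb (sub_nonneg.mpr ht₁)]

theorem one_add_div_div_one_add_div_le {x : ℝ} (hx : 1 < x) :
    (1 + 3 / (8 * (x - 1))) / (1 + 1 / (2 * (x - 1))) ≤ 1 - 1 / (8 * x) := by
  have hx₁ : 0 < x - 1 := by linarith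
  rw [div_le_iff₀ (by positivity)]
  field_simp
  nlinarith

section

variable {n : ℕ}

theorem signVec_mul_signVec (b c : Fin n → Bool) (i : Fin n) :
    signVec n b i * signVec n c i = if b i = c i then 1 else -1 := by
  unfold signVec; cases b i <;> cases c i <;> norm_num

theorem abs_signVec (b : Fin n → Bool) (i : Fin n) : |signVec n b i| = 1 := by
  unfold signVec; split <;> norm_num

theorem signVec_dotProduct_self (b : Fin n → Bool) : signVec n b ⬝ᵥ signVec n b = n := by
  simp [dotProduct, signVec_mul_signVec]

theorem signVec_dotProduct_le_sub_two {b c : Fin n → Bool} (hbc : b ≠ c) :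
    signVec n c ⬝ᵥ signVec n b ≤ n - 2 := by
  obtain ⟨i₀, hi₀⟩ := Function.ne_iff.mp hbc
  have hrest : ∑ i ∈ univ.erase i₀, signVec n c i * signVec n b i ≤ (n - 1 : ℝ) := by
    refine (sum_le_card_nsmul _ _ 1 fun i _ => ?_).trans_eq ?_
    · rw [signVec_mul_signVec]; split <;> norm_num
    · rw [card_erase_of_mem (mem_univ _), card_univ, Fintype.card_fin, nsmul_one,
        Nat.cast_pred (Fin.pos i₀)]
  rw [dotProduct, ← add_sum_erase _ _ (mem_univ i₀), signVec_mul_signVec,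
    if_neg (Ne.symm hi₀)]
  linarith

theorem signVec_decide_nonneg_mul_abs (x : Fin n → ℝ) (i : Fin n) :
    signVec n (fun i => decide (0 ≤ x i)) i * |x i| = x i := by
  unfold signVec
  by_cases h : 0 ≤ x i
  · simp [h, abs_of_nonneg h]
  · simp [h, abs_of_neg (not_le.mp h)]

theorem signVec_decide_nonneg_mul_self (x : Fin n → ℝ) (i : Fin n) :
    signVec n (fun i => decide (0 ≤ x i)) i * x i = |x i| := by
  conv_lhs => rw [← signVec_decide_nonneg_mul_abs x i, ← mul_assoc]
  rw [signVec_mul_signVec, if_pos rfl, one_mul]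

theorem convex_setOf_dotProduct_le (s : Fin n → ℝ) (c : ℝ) :
    Convex ℝ {x | s ⬝ᵥ x ≤ c} :=
  convex_halfSpace_le (dotProductBilin ℝ ℝ s).isLinear c

theorem convex_setOf_le_dotProduct (s : Fin n → ℝ) (c : ℝ) :
    Convex ℝ {x | c ≤ s ⬝ᵥ x} :=
  convex_halfSpace_ge (dotProductBilin ℝ ℝ s).isLinear c

theorem crossPolytope_subset_dotProduct_le {s : Fin n → ℝ} (hs : ∀ i, |s i| ≤ 1) :
    crossPolytope n ⊆ {x | s ⬝ᵥ x ≤ 1} := by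
  refine convexHull_min ?_ (convex_setOf_dotProduct_le s 1)
  rintro _ (⟨i, rfl⟩ | ⟨i, rfl⟩) <;> simp only [mem_ofPred_eq, dotProduct_single]
  · simpa using (le_abs_self _).trans (hs i)
  · simpa using (neg_le_abs _).trans (hs i)

theorem sum_abs_le_one_of_mem_crossPolytope {x : Fin n → ℝ} (hx : x ∈ crossPolytope n) :
    ∑ i, |x i| ≤ 1 := by
  simpa only [mem_ofPred_eq, dotProduct, signVec_decide_nonneg_mul_self] using
    crossPolytope_subset_dotProduct_le (fun i => (abs_signVec (decide <| 0 ≤ x ·) i).le) hx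

theorem peak_subset_one_le_dotProduct (hn : 2 ≤ n) (b : Fin n → Bool) :
    peak n (signVec n b) ⊆ {x | 1 ≤ signVec n b ⬝ᵥ x} := by
  have hn' : (2 : ℝ) ≤ n := by exact_mod_cast hn
  refine convexHull_min ?_ (convex_setOf_le_dotProduct _ 1)
  rintro _ (⟨i, rfl⟩ | rfl)
  · simp [dotProduct_single, signVec_mul_signVec]
  · rw [mem_ofPred_eq, dotProduct_smul, signVec_dotProduct_self, smul_eq_mul,
      le_inv_mul_iff₀ (by linarith)]
    linarith

theorem peak_subset_dotProduct_le_one (hn : 2 ≤ n) {b c : Fin n → Bool} (hbc : b ≠ c) :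
    peak n (signVec n b) ⊆ {x | signVec n c ⬝ᵥ x ≤ 1} := by
  have hn' : (2 : ℝ) ≤ n := by exact_mod_cast hn
  refine convexHull_min ?_ (convex_setOf_dotProduct_le _ 1)
  rintro _ (⟨i, rfl⟩ | rfl)
  · rw [mem_ofPred_eq, dotProduct_single, mul_comm, signVec_mul_signVec]
    split <;> norm_num
  · rw [mem_ofPred_eq, dotProduct_smul, smul_eq_mul, inv_mul_le_iff₀ (by linarith)]
    linarith [signVec_dotProduct_le_sub_two hbc]

noncomputable def cornerSimplex (n : ℕ) : Set (Fin n → ℝ) :=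
  convexHull ℝ (insert 0 (range fun i : Fin n => Pi.single i (1 : ℝ)))

theorem mem_cornerSimplex {y : Fin n → ℝ} (h0 : ∀ i, 0 ≤ y i) (h1 : ∑ i, y i ≤ 1) :
    y ∈ cornerSimplex n := by
  let weight : Option (Fin n) → ℝ := fun o => o.elim (1 - ∑ i, y i) y
  let vertex : Option (Fin n) → Fin n → ℝ := fun o => o.elim 0 fun i => Pi.single i 1
  have hy : ∑ o, weight o • vertex o = y := by
    simp [weight, vertex, Fintype.sum_option, ← Pi.single_smul, Finset.univ_sum_single]
  rw [← hy]
  refine (convex_convexHull ℝ _).sum_mem (fun o _ => ?_) ?_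
    (fun o _ => subset_convexHull ℝ _ ?_)
  · cases o
    · simpa [weight] using h1
    · exact h0 _
  · simp [weight, Fintype.sum_option]
  · cases o
    · exact mem_insert _ _
    · exact mem_insert_of_mem _ ⟨_, rfl⟩

/-- `x ↦ peakMatrix n s *ᵥ x + (n - 1)⁻¹ • s` maps `0` to the apex and `e_i` to `s_i e_i`. -/
noncomputable def peakMatrix (n : ℕ) (s : Fin n → ℝ) : Matrix (Fin n) (Fin n) ℝ :=
  diagonal s * (1 + replicateCol Unit (fun _ : Fin n => -((n : ℝ) - 1)⁻¹) *
    replicateRow Unit (fun _ : Fin n => (1 : ℝ)))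

theorem peakMatrix_apply (s : Fin n → ℝ) (i j : Fin n) :
    peakMatrix n s i j = s i * ((1 : Matrix (Fin n) (Fin n) ℝ) i j - ((n : ℝ) - 1)⁻¹) := by
  rw [peakMatrix, diagonal_mul]
  simp [mul_apply, sub_eq_add_neg]

theorem det_peakMatrix (s : Fin n → ℝ) :
    (peakMatrix n s).det = (∏ i, s i) * (1 - n * ((n : ℝ) - 1)⁻¹) := by
  rw [peakMatrix, det_mul, det_diagonal, det_one_add_replicateCol_mul_replicateRow]
  simp [dotProduct, sub_eq_add_neg]

theorem peak_eq_vadd_image (s : Fin n → ℝ) :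
    peak n s = ((n : ℝ) - 1)⁻¹ • s +ᵥ toLin' (peakMatrix n s) '' cornerSimplex n := by
  rw [cornerSimplex, LinearMap.image_convexHull, ← convexHull_vadd, image_insert_eq,
    vadd_set_insert, ← range_comp, peak, union_comm, ← insert_eq]
  congr 2
  · simp
  · rw [vadd_set_range]
    congr 1
    ext i j
    simp only [Function.comp_apply, toLin'_apply, mulVec_single_one, col_apply, vadd_eq_add,
      Pi.add_apply, Pi.smul_apply, smul_eq_mul, peakMatrix_apply, one_apply, Pi.single_apply]
    split_ifs with h
    · subst h; ring
    · ring

theorem volume_peak (hn : 2 ≤ n) (s : Fin n → ℝ) :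
    volume (peak n s) =
      ENNReal.ofReal (|∏ i, s i| * ((n : ℝ) - 1)⁻¹) * volume (cornerSimplex n) := by
  have hn' : (0 : ℝ) < n - 1 := by
    have : (2 : ℝ) ≤ n := by exact_mod_cast hn
    linarith
  have hdet : 1 - n * ((n : ℝ) - 1)⁻¹ = -((n : ℝ) - 1)⁻¹ := by
    field_simp
    ring
  rw [peak_eq_vadd_image, measure_vadd, Measure.addHaar_image_linearMap, LinearMap.det_toLin',
    det_peakMatrix, hdet, abs_mul, abs_neg, abs_of_pos (inv_pos.mpr hn')]

theorem volume_peak_signVec (hn : 2 ≤ n) (b : Fin n → Bool) :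
    volume (peak n (signVec n b)) =
      ENNReal.ofReal ((n : ℝ) - 1)⁻¹ * volume (cornerSimplex n) := by
  rw [volume_peak hn, Finset.abs_prod]
  simp [abs_signVec]

theorem crossPolytope_subset_iUnion_image_cornerSimplex :
    crossPolytope n ⊆ ⋃ b, toLin' (diagonal (signVec n b)) '' cornerSimplex n := by
  intro x hx
  refine mem_iUnion.mpr ⟨fun i => decide (0 ≤ x i), fun i => |x i|,
    mem_cornerSimplex (fun i => abs_nonneg _) (sum_abs_le_one_of_mem_crossPolytope hx), ?_⟩
  ext i
  simp [mulVec_diagonal, signVec_decide_nonneg_mul_abs]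

theorem volume_crossPolytope_le : volume (crossPolytope n) ≤ 2 ^ n * volume (cornerSimplex n) :=
  calc volume (crossPolytope n)
      ≤ ∑ b : Fin n → Bool, volume (toLin' (diagonal (signVec n b)) '' cornerSimplex n) :=
        (measure_mono crossPolytope_subset_iUnion_image_cornerSimplex).trans
          (measure_iUnion_fintype_le _ _)
    _ = 2 ^ n * volume (cornerSimplex n) := by
        simp [Measure.addHaar_image_linearMap, LinearMap.det_toLin', Finset.abs_prod, abs_signVec]

def facetHyperplanes (n : ℕ) : Set (Fin n → ℝ) := ⋃ b, {x | signVec n b ⬝ᵥ x = 1}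

theorem volume_facetHyperplanes (hn : n ≠ 0) : volume (facetHyperplanes n) = 0 := by
  refine measure_iUnion_null fun b => Measure.addHaar_setOf_apply_eq volume
    (f := dotProductBilin ℝ ℝ (signVec n b)) (fun h => hn ?_) 1
  simpa [signVec_dotProduct_self] using LinearMap.congr_fun h (signVec n b)

theorem crossPolytope_inter_peak_subset (hn : 2 ≤ n) (b : Fin n → Bool) :
    crossPolytope n ∩ peak n (signVec n b) ⊆ facetHyperplanes n := fun _ ⟨hO, hP⟩ =>
  mem_iUnion_of_mem b <| le_antisymm
    (crossPolytope_subset_dotProduct_le (fun i => (abs_signVec b i).le) hO)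
    (peak_subset_one_le_dotProduct hn b hP)

theorem peak_inter_peak_subset (hn : 2 ≤ n) {b c : Fin n → Bool} (hbc : b ≠ c) :
    peak n (signVec n b) ∩ peak n (signVec n c) ⊆ facetHyperplanes n := fun _ ⟨hb, hc⟩ =>
  mem_iUnion_of_mem c <| le_antisymm
    (peak_subset_dotProduct_le_one hn hbc hb) (peak_subset_one_le_dotProduct hn c hc)

theorem volume_body (hn : 2 ≤ n) (w : (Fin n → Bool) → Bool) :
    volume (body n w) = volume (crossPolytope n) +
      wt w * (ENNReal.ofReal ((n : ℝ) - 1)⁻¹ * volume (cornerSimplex n)) := by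
  have hH := volume_facetHyperplanes (n := n) (by omega)
  have hpeak (b : Fin n → Bool) : NullMeasurableSet (peak n (signVec n b)) volume :=
    (convex_convexHull ℝ _).nullMeasurableSet volume
  have hbody : body n w =
      crossPolytope n ∪ ⋃ b ∈ Finset.univ.filter (w · = true), peak n (signVec n b) := by
    simp [body]
  rw [hbody, measure_union₀ (Finset.nullMeasurableSet_biUnion _ fun b _ => hpeak b),
    measure_biUnion_finset₀
      (fun b _ c _ hbc => measure_mono_null (peak_inter_peak_subset hn hbc) hH) fun b _ => hpeak b]
  · simp [volume_peak_signVec hn, wt]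
  · refine measure_mono_null ?_ hH
    rw [inter_iUnion₂]
    exact iUnion₂_subset fun b _ => crossPolytope_inter_peak_subset hn b

theorem body_inter_subset (hn : 2 ≤ n) (w w' : (Fin n → Bool) → Bool) :
    body n w ∩ body n w' ⊆ body n (w ⊓ w') ∪ facetHyperplanes n := by
  rintro x ⟨hx | hx, hx' | hx'⟩
  · exact .inl (.inl hx)
  · exact .inl (.inl hx)
  · exact .inl (.inl hx')
  simp only [mem_iUnion] at hx hx'
  obtain ⟨b, hb, hxb⟩ := hx
  obtain ⟨c, hc, hxc⟩ := hx'
  rcases eq_or_ne b c with rfl | hbc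
  · exact .inl (.inr (mem_iUnion₂_of_mem (show (w ⊓ w') b = true by simp [hb, hc]) hxb))
  · exact .inr (peak_inter_peak_subset hn hbc ⟨hxb, hxc⟩)

theorem volume_body_inter_le (hn : 2 ≤ n) (w w' : (Fin n → Bool) → Bool) :
    volume (body n w ∩ body n w') ≤ volume (body n (w ⊓ w')) :=
  calc volume (body n w ∩ body n w')
      ≤ volume (body n (w ⊓ w')) + volume (facetHyperplanes n) :=
        (measure_mono (body_inter_subset hn w w')).trans (measure_union_le _ _)
    _ = volume (body n (w ⊓ w')) := by rw [volume_facetHyperplanes (by omega), add_zero]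

theorem volume_cornerSimplex_ne_top : volume (cornerSimplex n) ≠ ∞ :=
  ((finite_range _).insert 0 |>.isCompact_convexHull ℝ |>.measure_lt_top).ne

theorem volume_crossPolytope_ne_top : volume (crossPolytope n) ≠ ∞ :=
  ne_top_of_le_ne_top (mul_ne_top (pow_ne_top ofNat_ne_top) volume_cornerSimplex_ne_top)
    volume_crossPolytope_le

theorem toReal_volume_crossPolytope_le :
    (volume (crossPolytope n)).toReal ≤ 2 ^ n * (volume (cornerSimplex n)).toReal := by
  simpa using toReal_mono (mul_ne_top (pow_ne_top ofNat_ne_top) volume_cornerSimplex_ne_top)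
    volume_crossPolytope_le

theorem volume_body_ne_top (hn : 2 ≤ n) (w : (Fin n → Bool) → Bool) :
    volume (body n w) ≠ ∞ := by
  rw [volume_body hn]
  finiteness [volume_crossPolytope_ne_top (n := n), volume_cornerSimplex_ne_top (n := n)]

theorem toReal_volume_body (hn : 2 ≤ n) (w : (Fin n → Bool) → Bool) :
    (volume (body n w)).toReal = (volume (crossPolytope n)).toReal +
      wt w * (((n : ℝ) - 1)⁻¹ * (volume (cornerSimplex n)).toReal) := by
  have hn' : (2 : ℝ) ≤ n := by exact_mod_cast hn
  rw [volume_body hn, toReal_add volume_crossPolytope_ne_top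
    (mul_ne_top (natCast_ne_top _) (mul_ne_top ofReal_ne_top volume_cornerSimplex_ne_top)),
    toReal_mul, toReal_mul, toReal_natCast, toReal_ofReal (inv_nonneg.mpr (by linarith))]

theorem toReal_volume_body_inter_div_le (hn : 2 ≤ n) (w w' : (Fin n → Bool) → Bool) :
    (volume (body n w ∩ body n w')).toReal / (volume (body n w)).toReal ≤
      ((volume (crossPolytope n)).toReal +
          wt (w ⊓ w') * (((n : ℝ) - 1)⁻¹ * (volume (cornerSimplex n)).toReal)) /
        ((volume (crossPolytope n)).toReal +
          wt w * (((n : ℝ) - 1)⁻¹ * (volume (cornerSimplex n)).toReal)) := by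
  rw [← toReal_volume_body hn, ← toReal_volume_body hn]
  exact div_le_div_of_nonneg_right
    (toReal_mono (volume_body_ne_top hn _) (volume_body_inter_le hn w w')) toReal_nonneg

end

theorem volume_inter_ratio_bodies_general (n : ℕ) (hn : 2 ≤ n)
    (w w' : (Fin n → Bool) → Bool)
    (hw : wt w = 2 ^ (n - 1)) (hw' : wt w' = 2 ^ (n - 1))
    (hdist : 2 ^ n / 4 ≤ hammingDist w w') :
    (volume (body n w ∩ body n w')).toReal / (volume (body n w)).toReal ≤
      (1 + 3 / (8 * ((n : ℝ) - 1))) / (1 + 1 / (2 * ((n : ℝ) - 1))) ∧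
    (1 + 3 / (8 * ((n : ℝ) - 1))) / (1 + 1 / (2 * ((n : ℝ) - 1))) ≤
      1 - 1 / (8 * (n : ℝ)) := by
  have hn' : (2 : ℝ) ≤ n := by exact_mod_cast hn
  have hn₁ : (n : ℝ) - 1 ≠ 0 := by linarith
  set V := (volume (crossPolytope n)).toReal
  set d := (volume (cornerSimplex n)).toReal
  set p := ((n : ℝ) - 1)⁻¹ * d
  have hp : 0 ≤ p := mul_nonneg (inv_nonneg.mpr (by linarith)) toReal_nonneg
  have hratio := toReal_volume_body_inter_div_le hn w w'
  rw [hw] at hratio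
  push_cast at hratio
  have hV : V ≤ 2 * (n - 1) * (2 ^ (n - 1) * p) :=
    toReal_volume_crossPolytope_le.trans_eq <| by
      rw [← pow_sub_mul_pow (2 : ℝ) (by omega : 1 ≤ n)]
      field_simp
      exact (mul_inv_cancel_left₀ hn₁ d).symm
  have hm : (wt (w ⊓ w') : ℝ) * p ≤ 3 / 4 * (2 ^ (n - 1) * p) := by
    have hk : 2 ^ (n - 1) ≤ 2 * hammingDist w w' := by
      have h₁ := pow_sub_mul_pow 2 hn
      have h₂ := pow_sub_mul_pow 2 (by omega : 1 ≤ n)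
      omega
    have := (Nat.cast_le (α := ℝ)).mpr (four_mul_wt_inf_le hw hw' hk)
    push_cast at this
    nlinarith
  refine ⟨hratio.trans ((add_div_add_le_of_le_mul toReal_nonneg hV hm (by positivity)
    (by linarith) (by norm_num) (by norm_num)).trans_eq ?_),
    one_add_div_div_one_add_div_le (by linarith)⟩
  field_simp
  ring

theorem volume_inter_ratio_bodies (n : ℕ) (hn : 2 ≤ n)
    (w w' : (Fin n → Bool) → Bool) (hne : w ≠ w')
    (hw : wt w = 2 ^ (n - 1)) (hw' : wt w' = 2 ^ (n - 1))
    (hdist : 2 ^ n / 4 ≤ hammingDist w w') :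
    (volume (body n w ∩ body n w')).toReal / (volume (body n w)).toReal ≤
      (1 + 3 / (8 * ((n : ℝ) - 1))) / (1 + 1 / (2 * ((n : ℝ) - 1))) ∧
    (1 + 3 / (8 * ((n : ℝ) - 1))) / (1 + 1 / (2 * ((n : ℝ) - 1))) ≤
      1 - 1 / (8 * (n : ℝ)) :=
  volume_inter_ratio_bodies_general n hn w w' hw hw' hdist
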